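/- arXiv:math/0506115 — 2 statements merged into one kernel-verified Lean document; each statement's English description precedes it below -/
import Mathlib

section
/- Every element x of SL2(F) lies in I·η·I for exactly one matrix η in the set R = { diag(t1^i t2^j, t1^{-i} t2^{-j}) : (i,j) ∈ ℤ² } ∪ { antidiag(t1^i t2^j, -t1^{-i} t2^{-j}) : (i,j) ∈ ℤ² } (i.e. the double cosets IηI for η ∈ R partition SL2(F)). -/
noncomputable section

/-- The 2-dimensional local field `F = 𝔽_q((t1))((t2))` (iterated Laurent series). -/
abbrev F2 (Fq : Type) [Field Fq] : Type := LaurentSeries (LaurentSeries Fq)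

variable (Fq : Type) [Field Fq] [Fintype Fq]

/-- The local parameter `t1`. -/
def t1 : F2 Fq := HahnSeries.single 0 (HahnSeries.single 1 1)

/-- The local parameter `t2`. -/
def t2 : F2 Fq := HahnSeries.single 1 1

/-- The rank-two valuation `v(x) = (v1 x, v2 x)` of a nonzero `x` (junk value at `0`):
`v2 x` is the `t2`-adic order of `x`, and `v1 x` is the `t1`-adic order of the leading
`t2`-coefficient of `x`. -/
def vv (x : F2 Fq) : ℤ × ℤ := ((x.coeff x.order).order, x.order)

/-- The lexicographic-from-the-right (non-strict) order on `ℤ²`. -/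
def lexle (a b : ℤ × ℤ) : Prop := a.2 < b.2 ∨ (a.2 = b.2 ∧ a.1 ≤ b.1)

/-- The lexicographic-from-the-right strict order on `ℤ²`. -/
def lexlt (a b : ℤ × ℤ) : Prop := a.2 < b.2 ∨ (a.2 = b.2 ∧ a.1 < b.1)

/-- `v(x) ≤ v(y)`, with the convention `v(0) = ∞`. -/
def vle (x y : F2 Fq) : Prop := x ≠ 0 ∧ (y = 0 ∨ lexle (vv Fq x) (vv Fq y))

/-- `v(x) < v(y)`, with the convention `v(0) = ∞`. -/
def vlt (x y : F2 Fq) : Prop := x ≠ 0 ∧ (y = 0 ∨ lexlt (vv Fq x) (vv Fq y))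

/-- The rank-two valuation ring `O` of `F`. -/
def Oring : Set (F2 Fq) := {x | x = 0 ∨ lexle (0, 0) (vv Fq x)}

/-- `SL₂(F)` as the set of 2×2 matrices of determinant 1. -/
def SL2 : Set (Matrix (Fin 2) (Fin 2) (F2 Fq)) := {g | g.det = 1}

/-- The (double) Iwahori subgroup `I ⊆ SL₂(O)`: entries in `O`, lower-left entry in `t1·O`. -/
def Iwahori : Set (Matrix (Fin 2) (Fin 2) (F2 Fq)) :=
  {g | g.det = 1 ∧ (∀ i j, g i j ∈ Oring Fq) ∧ ∃ y ∈ Oring Fq, g 1 0 = t1 Fq * y}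

/-- The matrix `η^{(1)}_{i,j} = diag(t1^i t2^j, t1^{-i} t2^{-j})`. -/
def eta1 (i j : ℤ) : Matrix (Fin 2) (Fin 2) (F2 Fq) :=
  !![t1 Fq ^ i * t2 Fq ^ j, 0; 0, t1 Fq ^ (-i) * t2 Fq ^ (-j)]

/-- The matrix `η^{(2)}_{i,j} = (0, t1^i t2^j; -t1^{-i} t2^{-j}, 0)`. -/
def eta2 (i j : ℤ) : Matrix (Fin 2) (Fin 2) (F2 Fq) :=
  !![0, t1 Fq ^ i * t2 Fq ^ j; -(t1 Fq ^ (-i) * t2 Fq ^ (-j)), 0]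

/-- The double coset `I·η·I`. -/
def doubleCoset (η : Matrix (Fin 2) (Fin 2) (F2 Fq)) : Set (Matrix (Fin 2) (Fin 2) (F2 Fq)) :=
  {x | ∃ g ∈ Iwahori Fq, ∃ h ∈ Iwahori Fq, x = g * η * h}

/-- The right coset `I·z`. -/
def rcoset (z : Matrix (Fin 2) (Fin 2) (F2 Fq)) : Set (Matrix (Fin 2) (Fin 2) (F2 Fq)) :=
  {x | ∃ g ∈ Iwahori Fq, x = g * z}
/-- The set `R` of double coset representatives. -/
def Rset : Set (Matrix (Fin 2) (Fin 2) (F2 Fq)) :=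
  {m | ∃ i j : ℤ, m = eta1 Fq i j ∨ m = eta2 Fq i j}

namespace Bruhat

open HahnSeries

variable {Fq : Type} [Field Fq]

local notation "F" => F2 Fq
local notation "K" => LaurentSeries Fq

lemma Finv_eq {a b : F} (h : a * b = 1) : b⁻¹ = a :=
  inv_eq_of_mul_eq_one_left (G := F2 Fq) h

lemma Finv_ne {a : F} (h : a ≠ 0) : a⁻¹ ≠ (0 : F) := inv_ne_zero (a := a) h

lemma Fmul_inv {a : F} (h : a ≠ 0) : a * a⁻¹ = 1 := mul_inv_cancel₀ (a := a) h

instance : IsRightCancelAdd (F2 Fq) :=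
  ⟨fun b a c h => by
    calc a = a + b + -b := (add_neg_cancel_right a b).symm
    _ = c + b + -b := by rw [show a + b = c + b from h]
    _ = c := add_neg_cancel_right c b⟩

instance : IsLeftCancelAdd (F2 Fq) :=
  ⟨fun a b c h => by
    calc b = -a + (a + b) := (neg_add_cancel_left a b).symm
    _ = -a + (a + c) := by rw [show a + b = a + c from h]
    _ = c := neg_add_cancel_left a c⟩

lemma lead_eq {R : Type} [Zero R] {x : HahnSeries ℤ R} (hx : x ≠ 0) :
    x.coeff x.order = x.leadingCoeff := by
  rw [HahnSeries.leadingCoeff_eq]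

lemma lead_ne {R : Type} [Zero R] {x : HahnSeries ℤ R} (hx : x ≠ 0) :
    x.coeff x.order ≠ 0 := by rw [lead_eq hx]; exact HahnSeries.leadingCoeff_ne_zero.mpr hx

lemma vv_mul {x y : F} (hx : x ≠ 0) (hy : y ≠ 0) :
    vv Fq (x * y) = ((vv Fq x).1 + (vv Fq y).1, (vv Fq x).2 + (vv Fq y).2) := by
  have h2 : (x * y).order = x.order + y.order := HahnSeries.order_mul hx hy
  have h3 : (x * y).coeff ((x * y).order) = x.leadingCoeff * y.leadingCoeff := by
    rw [h2]; exact HahnSeries.coeff_mul_order_add_order x y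
  unfold vv
  rw [h3, h2, HahnSeries.order_mul (HahnSeries.leadingCoeff_ne_zero.mpr hx)
    (HahnSeries.leadingCoeff_ne_zero.mpr hy), lead_eq hx, lead_eq hy]

/-- the monomial t1^i t2^j -/
def tm (i j : ℤ) : F2 Fq := HahnSeries.single j (HahnSeries.single i 1)

lemma tm_ne_zero (i j : ℤ) : (tm i j : F) ≠ 0 :=
  HahnSeries.single_ne_zero (HahnSeries.single_ne_zero one_ne_zero)

lemma vv_tm (i j : ℤ) : vv Fq (tm i j) = (i, j) := by
  unfold vv tm
  rw [HahnSeries.order_single (HahnSeries.single_ne_zero one_ne_zero),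
    HahnSeries.coeff_single_same, HahnSeries.order_single one_ne_zero]

lemma vv_one : vv Fq 1 = (0, 0) := by
  have : (1 : F) = tm 0 0 := by
    unfold tm
    rw [HahnSeries.single_zero_one, HahnSeries.single_zero_one]
  rw [this, vv_tm]

lemma tm_mul (i j k l : ℤ) : (tm i j : F) * tm k l = tm (i + k) (j + l) := by
  unfold tm
  rw [HahnSeries.single_mul_single, HahnSeries.single_mul_single, one_mul]

lemma zpow_single {R : Type} [Field R] (j : ℤ) :
    (HahnSeries.single (1 : ℤ) (1 : R)) ^ j = HahnSeries.single j 1 := by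
  have key : ∀ n : ℕ, (HahnSeries.single (1 : ℤ) (1 : R)) ^ n = HahnSeries.single (n : ℤ) 1 := by
    intro n
    rw [HahnSeries.single_pow, one_pow, nsmul_eq_mul, mul_one]
  rcases j with n | n
  · rw [Int.ofNat_eq_coe, zpow_natCast, key]
  · rw [zpow_negSucc, key]
    refine inv_eq_of_mul_eq_one_left (G := HahnSeries ℤ R) ?_
    rw [HahnSeries.single_mul_single, one_mul]
    have : Int.negSucc n + (↑(n + 1) : ℤ) = 0 := by
      rw [Int.negSucc_eq]; push_cast; ring
    rw [this, HahnSeries.single_zero_one]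

lemma t2_zpow (j : ℤ) : (t2 Fq) ^ j = HahnSeries.single j (1 : K) := by
  unfold t2; exact zpow_single j

lemma t1_zpow (i : ℤ) : (t1 Fq) ^ i = HahnSeries.single (0 : ℤ) (HahnSeries.single i (1 : Fq)) := by
  have key : ∀ n : ℕ, (t1 Fq) ^ n = HahnSeries.single (0 : ℤ) (HahnSeries.single (n : ℤ) (1 : Fq)) := by
    intro n
    unfold t1
    rw [HahnSeries.single_pow, HahnSeries.single_pow]
    norm_num
  rcases i with n | n
  · rw [Int.ofNat_eq_coe, zpow_natCast, key]
  · rw [zpow_negSucc, key]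
    apply Finv_eq
    rw [HahnSeries.single_mul_single, HahnSeries.single_mul_single, one_mul, add_zero]
    have : Int.negSucc n + (↑(n + 1) : ℤ) = 0 := by
      rw [Int.negSucc_eq]; push_cast; ring
    rw [this, HahnSeries.single_zero_one, HahnSeries.single_zero_one]

lemma t1t2 (i j : ℤ) : (t1 Fq) ^ i * (t2 Fq) ^ j = tm i j := by
  rw [t1_zpow, t2_zpow]
  unfold tm
  rw [HahnSeries.single_mul_single, zero_add, mul_one]

lemma vv_inv {x : F} (hx : x ≠ 0) :
    vv Fq x⁻¹ = (-(vv Fq x).1, -(vv Fq x).2) := by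
  have hxi : x⁻¹ ≠ (0 : F) := Finv_ne hx
  have h := vv_mul (Fq := Fq) hx hxi
  rw [Fmul_inv hx, vv_one] at h
  have h1 : (0:ℤ) = (vv Fq x).1 + (vv Fq x⁻¹).1 := congrArg Prod.fst h
  have h2 : (0:ℤ) = (vv Fq x).2 + (vv Fq x⁻¹).2 := congrArg Prod.snd h
  have h3 : vv Fq x⁻¹ = ((vv Fq x⁻¹).1, (vv Fq x⁻¹).2) := rfl
  rw [h3, Prod.mk.injEq]
  omega


lemma Fzero_mul (a : F) : (0 : F) * a = 0 := zero_mul a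
lemma Fmul_zero (a : F) : a * (0 : F) = 0 := mul_zero a
lemma Fmul_assoc (a b c : F) : a * b * c = a * (b * c) := mul_assoc a b c
lemma Fmul_comm (a b : F) : a * b = b * a := mul_comm a b
lemma Fone_mul (a : F) : (1 : F) * a = a := one_mul a
lemma Fmul_one (a : F) : a * (1 : F) = a := mul_one a

def Mset (Fq' : Type) [Field Fq'] : Set (F2 Fq') := {x | x = 0 ∨ lexle (1, 0) (vv Fq' x)}


lemma tm_zero_eq_one : (tm 0 0 : F) = 1 := by
  unfold tm
  rw [HahnSeries.single_zero_one, HahnSeries.single_zero_one]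

lemma F_one_ne_zero : (1 : F) ≠ 0 := by
  rw [← tm_zero_eq_one]
  exact tm_ne_zero 0 0

lemma mem_char (c1 c2 : ℤ) (x : F) :
    (x = 0 ∨ lexle (c1, c2) (vv Fq x)) ↔
      (∀ j < c2, x.coeff j = 0) ∧ (∀ i < c1, (x.coeff c2).coeff i = 0) := by
  by_cases hx : x = 0
  · subst hx
    simp [HahnSeries.coeff_zero]
  constructor
  · rintro (rfl | h)
    · exact absurd rfl hx
    simp only [lexle, vv] at h
    rcases h with h1 | ⟨h1, h2⟩
    · constructor
      · intro j hj
        exact HahnSeries.coeff_eq_zero_of_lt_order (lt_trans hj h1)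
      · intro i _
        rw [HahnSeries.coeff_eq_zero_of_lt_order h1, HahnSeries.coeff_zero]
    · constructor
      · intro j hj
        exact HahnSeries.coeff_eq_zero_of_lt_order (by omega)
      · intro i hi
        rw [h1]
        exact HahnSeries.coeff_eq_zero_of_lt_order (by omega)
  · rintro ⟨h1, h2⟩
    right
    have hord : c2 ≤ x.order := by
      by_contra hc
      exact lead_ne hx (h1 x.order (by omega))
    simp only [lexle, vv]
    rcases eq_or_lt_of_le hord with hc | hc
    · right
      refine ⟨hc, ?_⟩
      by_contra hcc
      push_neg at hcc
      have hne : x.coeff x.order ≠ 0 := lead_ne hx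
      have : (x.coeff x.order).coeff (x.coeff x.order).order = 0 := by
        have h3 := h2 (x.coeff x.order).order (by omega)
        rwa [hc] at h3
      exact lead_ne hne this
    · left
      exact hc

lemma Omem_iff (x : F) : x ∈ Oring Fq ↔
    (∀ j < 0, x.coeff j = 0) ∧ (∀ i < 0, (x.coeff 0).coeff i = 0) := mem_char 0 0 x

lemma Mmem_iff (x : F) : x ∈ Mset Fq ↔
    (∀ j < 0, x.coeff j = 0) ∧ (∀ i < 1, (x.coeff 0).coeff i = 0) := mem_char 1 0 x

lemma O_zero : (0 : F) ∈ Oring Fq := Or.inl rfl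

lemma M_zero : (0 : F) ∈ Mset Fq := Or.inl rfl

lemma O_one : (1 : F) ∈ Oring Fq := by
  right
  rw [vv_one]
  exact Or.inr ⟨rfl, le_refl 0⟩

lemma O_add {x y : F} (hx : x ∈ Oring Fq) (hy : y ∈ Oring Fq) : x + y ∈ Oring Fq := by
  rw [Omem_iff] at *
  refine ⟨fun j hj => ?_, fun i hi => ?_⟩
  · rw [HahnSeries.coeff_add, hx.1 j hj, hy.1 j hj, add_zero]
  · rw [HahnSeries.coeff_add, HahnSeries.coeff_add, hx.2 i hi, hy.2 i hi, add_zero]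

lemma M_add {x y : F} (hx : x ∈ Mset Fq) (hy : y ∈ Mset Fq) : x + y ∈ Mset Fq := by
  rw [Mmem_iff] at *
  refine ⟨fun j hj => ?_, fun i hi => ?_⟩
  · rw [HahnSeries.coeff_add, hx.1 j hj, hy.1 j hj, add_zero]
  · rw [HahnSeries.coeff_add, HahnSeries.coeff_add, hx.2 i hi, hy.2 i hi, add_zero]

lemma O_neg {x : F} (hx : x ∈ Oring Fq) : -x ∈ Oring Fq := by
  rw [Omem_iff] at *
  refine ⟨fun j hj => ?_, fun i hi => ?_⟩
  · rw [HahnSeries.coeff_neg, hx.1 j hj, neg_zero]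
  · rw [HahnSeries.coeff_neg, HahnSeries.coeff_neg, hx.2 i hi, neg_zero]

lemma M_neg {x : F} (hx : x ∈ Mset Fq) : -x ∈ Mset Fq := by
  rw [Mmem_iff] at *
  refine ⟨fun j hj => ?_, fun i hi => ?_⟩
  · rw [HahnSeries.coeff_neg, hx.1 j hj, neg_zero]
  · rw [HahnSeries.coeff_neg, HahnSeries.coeff_neg, hx.2 i hi, neg_zero]

lemma O_mul {x y : F} (hx : x ∈ Oring Fq) (hy : y ∈ Oring Fq) : x * y ∈ Oring Fq := by
  by_cases h0 : x = 0
  · rw [h0, Fzero_mul]; exact O_zero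
  by_cases h1 : y = 0
  · rw [h1, Fmul_zero]; exact O_zero
  rcases hx with rfl | hx
  · exact absurd rfl h0
  rcases hy with rfl | hy
  · exact absurd rfl h1
  right
  rw [vv_mul h0 h1]
  simp only [lexle] at *
  omega

lemma OM_mul {x y : F} (hx : x ∈ Oring Fq) (hy : y ∈ Mset Fq) : x * y ∈ Mset Fq := by
  by_cases h0 : x = 0
  · rw [h0, Fzero_mul]; exact M_zero
  by_cases h1 : y = 0
  · rw [h1, Fmul_zero]; exact M_zero
  rcases hx with rfl | hx
  · exact absurd rfl h0
  rcases hy with rfl | hy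
  · exact absurd rfl h1
  right
  rw [vv_mul h0 h1]
  simp only [lexle] at *
  omega

lemma M_sub_O : Mset Fq ⊆ Oring Fq := by
  rintro x (rfl | hx)
  · exact O_zero
  right
  simp only [lexle] at *
  omega

lemma one_not_M : (1 : F) ∉ Mset Fq := by
  rintro (h | h)
  · exact F_one_ne_zero h
  · rw [vv_one] at h
    simp only [lexle] at h
    omega


lemma t1_eq_tm : t1 Fq = tm 1 0 := rfl

lemma Mset_iff (x : F) : x ∈ Mset Fq ↔ ∃ y ∈ Oring Fq, x = t1 Fq * y := by
  constructor
  · rintro (rfl | hx)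
    · exact ⟨0, O_zero, by rw [Fmul_zero]⟩
    by_cases h0 : x = 0
    · exact ⟨0, O_zero, by rw [Fmul_zero, h0]⟩
    refine ⟨tm (-1) 0 * x, ?_, ?_⟩
    · right
      rw [vv_mul (tm_ne_zero _ _) h0, vv_tm]
      simp only [lexle] at *
      omega
    · rw [t1_eq_tm, ← Fmul_assoc, tm_mul]
      norm_num [tm_zero_eq_one, Fone_mul]
  · rintro ⟨y, hy, rfl⟩
    rcases hy with rfl | hy
    · rw [Fmul_zero]; exact M_zero
    by_cases h0 : y = 0
    · rw [h0, Fmul_zero]; exact M_zero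
    right
    rw [t1_eq_tm, vv_mul (tm_ne_zero _ _) h0, vv_tm]
    simp only [lexle] at *
    omega

/-! ### Matrix helpers -/

lemma mk2_eq {w x y z w' x' y' z' : F} (h1 : w = w') (h2 : x = x') (h3 : y = y')
    (h4 : z = z') : !![w, x; y, z] = !![w', x'; y', z'] := by rw [h1, h2, h3, h4]

lemma mk2_inj {w x y z w' x' y' z' : F} (h : !![w, x; y, z] = !![w', x'; y', z']) :
    w = w' ∧ x = x' ∧ y = y' ∧ z = z' := by
  refine ⟨?_, ?_, ?_, ?_⟩
  · simpa using congrFun (congrFun h 0) 0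
  · simpa using congrFun (congrFun h 0) 1
  · simpa using congrFun (congrFun h 1) 0
  · simpa using congrFun (congrFun h 1) 1

lemma pair_ext {p : ℤ × ℤ} {a b : ℤ} (h1 : p.1 = a) (h2 : p.2 = b) : p = (a, b) := by
  cases p; simp_all

lemma O_of_vv {x : F} (h : vv Fq x = (0, 0)) : x ∈ Oring Fq := by
  right; rw [h]; exact Or.inr ⟨rfl, le_refl 0⟩

lemma tm_inv (i j : ℤ) : (tm i j : F)⁻¹ = tm (-i) (-j) := by
  apply Finv_eq
  rw [tm_mul]
  norm_num [tm_zero_eq_one]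

lemma eta1_eq (i j : ℤ) : eta1 Fq i j = !![tm i j, 0; 0, tm (-i) (-j)] := by
  unfold eta1; rw [t1t2, t1t2]

lemma eta2_eq (i j : ℤ) : eta2 Fq i j = !![0, tm i j; -tm (-i) (-j), 0] := by
  unfold eta2; rw [t1t2, t1t2]

/-! ### The Iwahori subgroup -/

lemma mkI' {g : Matrix (Fin 2) (Fin 2) (F2 Fq)} (hdet : g.det = 1)
    (h00 : g 0 0 ∈ Oring Fq) (h01 : g 0 1 ∈ Oring Fq) (h10 : g 1 0 ∈ Mset Fq)
    (h11 : g 1 1 ∈ Oring Fq) : g ∈ Iwahori Fq := by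
  refine ⟨hdet, ?_, ?_⟩
  · intro i j
    fin_cases i <;> fin_cases j
    exacts [h00, h01, M_sub_O h10, h11]
  · exact (Mset_iff _).mp h10

lemma mkI {a b c d : F} (ha : a ∈ Oring Fq) (hb : b ∈ Oring Fq) (hc : c ∈ Mset Fq)
    (hd : d ∈ Oring Fq) (hdet : a * d - b * c = 1) : !![a, b; c, d] ∈ Iwahori Fq := by
  refine mkI' (by rw [Matrix.det_fin_two_of]; exact hdet) ?_ ?_ ?_ ?_ <;> simp
  exacts [ha, hb, hc, hd]

lemma I_entries {g : Matrix (Fin 2) (Fin 2) (F2 Fq)} (hg : g ∈ Iwahori Fq) :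
    g 0 0 ∈ Oring Fq ∧ g 0 1 ∈ Oring Fq ∧ g 1 0 ∈ Mset Fq ∧ g 1 1 ∈ Oring Fq ∧
      g 0 0 * g 1 1 - g 0 1 * g 1 0 = 1 := by
  obtain ⟨hdet, hO, y, hy, hc⟩ := hg
  refine ⟨hO 0 0, hO 0 1, ?_, hO 1 1, ?_⟩
  · rw [Mset_iff]; exact ⟨y, hy, hc⟩
  · rw [Matrix.det_fin_two] at hdet; exact hdet

lemma I_unit {g : Matrix (Fin 2) (Fin 2) (F2 Fq)} (hg : g ∈ Iwahori Fq) :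
    g 0 0 ≠ 0 ∧ g 1 1 ≠ 0 ∧ vv Fq (g 0 0) = (0, 0) ∧ vv Fq (g 1 1) = (0, 0) := by
  obtain ⟨ha, hb, hc, hd, hdet⟩ := I_entries hg
  have hbc : g 0 1 * g 1 0 ∈ Mset Fq := OM_mul hb hc
  have hadM : g 0 0 * g 1 1 ∉ Mset Fq := by
    intro hmem
    apply one_not_M (Fq := Fq)
    have : (1 : F) = g 0 0 * g 1 1 + -(g 0 1 * g 1 0) := by linear_combination -hdet
    rw [this]
    exact M_add hmem (M_neg hbc)
  have hane : g 0 0 ≠ 0 := by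
    intro h0
    exact hadM (by rw [h0, Fzero_mul]; exact M_zero)
  have hdne : g 1 1 ≠ 0 := by
    intro h0
    exact hadM (by rw [h0, Fmul_zero]; exact M_zero)
  have hvle : ¬ lexle (1, 0) (vv Fq (g 0 0 * g 1 1)) := by
    intro h
    exact hadM (Or.inr h)
  rw [vv_mul hane hdne] at hvle
  have hva : lexle (0, 0) (vv Fq (g 0 0)) := (ha.resolve_left hane)
  have hvd : lexle (0, 0) (vv Fq (g 1 1)) := (hd.resolve_left hdne)
  simp only [lexle] at hva hvd hvle
  exact ⟨hane, hdne, pair_ext (by omega) (by omega), pair_ext (by omega) (by omega)⟩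

lemma I_mul {g h : Matrix (Fin 2) (Fin 2) (F2 Fq)} (hg : g ∈ Iwahori Fq)
    (hh : h ∈ Iwahori Fq) : g * h ∈ Iwahori Fq := by
  obtain ⟨ga, gb, gc, gd, gdet⟩ := I_entries hg
  obtain ⟨ha, hb, hc, hd, hdet⟩ := I_entries hh
  have key : ∀ i j, (g * h) i j = g i 0 * h 0 j + g i 1 * h 1 j := by
    intro i j
    rw [Matrix.mul_apply, Fin.sum_univ_two]
  have e00 : (g * h) 0 0 ∈ Oring Fq := by
    rw [key]; exact O_add (O_mul ga ha) (O_mul gb (M_sub_O hc))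
  have e01 : (g * h) 0 1 ∈ Oring Fq := by
    rw [key]; exact O_add (O_mul ga hb) (O_mul gb hd)
  have e10 : (g * h) 1 0 ∈ Mset Fq := by
    rw [key]
    refine M_add ?_ ?_
    · rw [Fmul_comm]; exact OM_mul ha gc
    · exact OM_mul gd hc
  have e11 : (g * h) 1 1 ∈ Oring Fq := by
    rw [key]; exact O_add (O_mul (M_sub_O gc) hb) (O_mul gd hd)
  refine mkI' ?_ e00 e01 e10 e11
  rw [Matrix.det_mul, hg.1, hh.1]
  exact Fone_mul 1

lemma Fmul_ne_zero {a b : F} (ha : a ≠ 0) (hb : b ≠ 0) : a * b ≠ 0 :=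
  mul_ne_zero ha hb

lemma Mat_assoc (A B C : Matrix (Fin 2) (Fin 2) (F2 Fq)) : A * B * C = A * (B * C) :=
  mul_assoc A B C

lemma Mat_one_mul (A : Matrix (Fin 2) (Fin 2) (F2 Fq)) : 1 * A = A := one_mul A

lemma Mat_mul_one (A : Matrix (Fin 2) (Fin 2) (F2 Fq)) : A * 1 = A := mul_one A

lemma I_one : (1 : Matrix (Fin 2) (Fin 2) (F2 Fq)) ∈ Iwahori Fq := by
  rw [Matrix.one_fin_two]
  exact mkI O_one O_zero M_zero O_one (by ring1)

lemma entry_simp {a b c d : F} :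
    !![a, b; c, d] 0 0 = a ∧ !![a, b; c, d] 0 1 = b ∧ !![a, b; c, d] 1 0 = c ∧
      !![a, b; c, d] 1 1 = d := by
  refine ⟨?_, ?_, ?_, ?_⟩ <;> simp

lemma I_entries' {a b c d : F} (h : !![a, b; c, d] ∈ Iwahori Fq) :
    a ∈ Oring Fq ∧ b ∈ Oring Fq ∧ c ∈ Mset Fq ∧ d ∈ Oring Fq ∧ a * d - b * c = 1 := by
  obtain ⟨h1, h2, h3, h4, h5⟩ := I_entries h
  rw [entry_simp.1] at h1
  rw [entry_simp.2.1] at h2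
  rw [entry_simp.2.2.1] at h3
  rw [entry_simp.2.2.2] at h4
  rw [entry_simp.1, entry_simp.2.1, entry_simp.2.2.1, entry_simp.2.2.2] at h5
  exact ⟨h1, h2, h3, h4, h5⟩

lemma I_inv {g : Matrix (Fin 2) (Fin 2) (F2 Fq)} (hg : g ∈ Iwahori Fq) :
    ∃ g', g' ∈ Iwahori Fq ∧ g * g' = 1 ∧ g' * g = 1 := by
  obtain ⟨a, b, c, d, rfl⟩ : ∃ a b c d, g = !![a, b; c, d] :=
    ⟨g 0 0, g 0 1, g 1 0, g 1 1, Matrix.eta_fin_two g⟩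
  obtain ⟨ha, hb, hc, hd, hdet⟩ := I_entries' hg
  refine ⟨!![d, -b; -c, a],
    mkI hd (O_neg hb) (M_neg hc) ha (by linear_combination hdet), ?_, ?_⟩
  · rw [Matrix.mul_fin_two, Matrix.one_fin_two]
    exact mk2_eq (by linear_combination hdet) (by ring1) (by ring1) (by linear_combination hdet)
  · rw [Matrix.mul_fin_two, Matrix.one_fin_two]
    exact mk2_eq (by linear_combination hdet) (by ring1) (by ring1) (by linear_combination hdet)

lemma dc_shift {η x L R L' R' : Matrix (Fin 2) (Fin 2) (F2 Fq)}
    (hL' : L' ∈ Iwahori Fq) (hR' : R' ∈ Iwahori Fq)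
    (hLL : L' * L = 1) (hRR : R * R' = 1)
    (h : L * x * R ∈ doubleCoset Fq η) : x ∈ doubleCoset Fq η := by
  obtain ⟨g, hg, k, hk, heq⟩ := h
  refine ⟨L' * g, I_mul hL' hg, k * R', I_mul hk hR', ?_⟩
  calc x = (L' * L) * x * (R * R') := by rw [hLL, hRR, Mat_one_mul, Mat_mul_one]
  _ = L' * (L * x * R) * R' := by simp only [Mat_assoc]
  _ = L' * (g * η * k) * R' := by rw [heq]
  _ = (L' * g) * η * (k * R') := by simp only [Mat_assoc]

lemma elemL_mem {m : F} (hm : m ∈ Oring Fq) : !![(1:F), m; 0, 1] ∈ Iwahori Fq :=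
  mkI O_one hm M_zero O_one (by ring1)

lemma elemW_mem {w : F} (hw : w ∈ Mset Fq) : !![(1:F), 0; w, 1] ∈ Iwahori Fq :=
  mkI O_one O_zero hw O_one (by ring1)

lemma elemL_inv (m : F) : !![(1:F), -m; 0, 1] * !![(1:F), m; 0, 1] = 1 := by
  rw [Matrix.mul_fin_two, Matrix.one_fin_two]
  exact mk2_eq (by ring1) (by ring1) (by ring1) (by ring1)

lemma elemL_inv' (m : F) : !![(1:F), m; 0, 1] * !![(1:F), -m; 0, 1] = 1 := by
  rw [Matrix.mul_fin_two, Matrix.one_fin_two]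
  exact mk2_eq (by ring1) (by ring1) (by ring1) (by ring1)

lemma elemW_inv (w : F) : !![(1:F), 0; -w, 1] * !![(1:F), 0; w, 1] = 1 := by
  rw [Matrix.mul_fin_two, Matrix.one_fin_two]
  exact mk2_eq (by ring1) (by ring1) (by ring1) (by ring1)

lemma elemW_inv' (w : F) : !![(1:F), 0; w, 1] * !![(1:F), 0; -w, 1] = 1 := by
  rw [Matrix.mul_fin_two, Matrix.one_fin_two]
  exact mk2_eq (by ring1) (by ring1) (by ring1) (by ring1)

lemma diag_mem {u : F} (hu : u ≠ 0) (hvv : vv Fq u = (0, 0)) :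
    !![u, 0; 0, u⁻¹] ∈ Iwahori Fq := by
  refine mkI (O_of_vv hvv) O_zero M_zero (O_of_vv ?_) ?_
  · rw [vv_inv hu, hvv]; simp
  · have h := Fmul_inv hu
    linear_combination h

lemma dc_T1 {a z : F} {i j : ℤ} (ha : a ≠ 0) (hvv : vv Fq a = (i, j)) (hz : z ∈ Oring Fq) :
    !![a, a * z; 0, a⁻¹] ∈ doubleCoset Fq (eta1 Fq i j) := by
  set u : F := a * tm (-i) (-j) with hu
  have hu0 : u ≠ (0:F) := Fmul_ne_zero ha (tm_ne_zero _ _)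
  have hvu : vv Fq u = (0, 0) := by
    rw [hu, vv_mul ha (tm_ne_zero _ _), vv_tm, hvv]; simp
  have hau : a = u * tm i j := by
    rw [hu, Fmul_assoc, tm_mul]
    norm_num [tm_zero_eq_one, Fmul_one]
  have h1 : u * u⁻¹ = (1:F) := Fmul_inv hu0
  have h2 : tm (-i) (-j) * tm i j = (1:F) := by rw [tm_mul]; norm_num [tm_zero_eq_one]
  have hainv : a⁻¹ = u⁻¹ * tm (-i) (-j) := by
    apply Finv_eq
    have h3 : u⁻¹ * tm (-i) (-j) * a = u * u⁻¹ * (tm (-i) (-j) * tm i j) := by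
      rw [hau]; ring1
    rw [h3, h1, h2, Fmul_one]
  refine ⟨!![u, 0; 0, u⁻¹], diag_mem hu0 hvu, !![1, z; 0, 1], elemL_mem hz, ?_⟩
  rw [eta1_eq, Matrix.mul_fin_two, Matrix.mul_fin_two]
  refine mk2_eq ?_ ?_ (by ring1) ?_
  · rw [hau]; ring1
  · nth_rewrite 1 [hau]
    ring1
  · rw [hainv]; ring1

lemma dc_T2 {b : F} {i j : ℤ} (hb : b ≠ 0) (hvv : vv Fq b = (i, j)) :
    !![0, b; -b⁻¹, 0] ∈ doubleCoset Fq (eta2 Fq i j) := by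
  set u : F := b * tm (-i) (-j) with hu
  have hu0 : u ≠ (0:F) := Fmul_ne_zero hb (tm_ne_zero _ _)
  have hvu : vv Fq u = (0, 0) := by
    rw [hu, vv_mul hb (tm_ne_zero _ _), vv_tm, hvv]; simp
  have hbu : b = u * tm i j := by
    rw [hu, Fmul_assoc, tm_mul]
    norm_num [tm_zero_eq_one, Fmul_one]
  have h1 : u * u⁻¹ = (1:F) := Fmul_inv hu0
  have h2 : tm (-i) (-j) * tm i j = (1:F) := by rw [tm_mul]; norm_num [tm_zero_eq_one]
  have hbinv : b⁻¹ = u⁻¹ * tm (-i) (-j) := by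
    apply Finv_eq
    have h3 : u⁻¹ * tm (-i) (-j) * b = u * u⁻¹ * (tm (-i) (-j) * tm i j) := by
      rw [hbu]; ring1
    rw [h3, h1, h2, Fmul_one]
  refine ⟨!![u, 0; 0, u⁻¹], diag_mem hu0 hvu, 1, I_one, ?_⟩
  rw [Mat_mul_one, eta2_eq, Matrix.mul_fin_two]
  refine mk2_eq (by ring1) ?_ ?_ (by ring1)
  · rw [hbu]; ring1
  · rw [hbinv]; ring1

/-! ### lex helpers and ratio lemmas -/

lemma Fneg_ne {a : F} (h : a ≠ 0) : -a ≠ (0:F) :=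
  fun h0 => h ((@neg_eq_zero (F2 Fq) _ a).mp h0)

lemma Finv_inv (a : F) : a⁻¹⁻¹ = a := inv_inv a

lemma lex_total (p q : ℤ × ℤ) : lexle p q ∨ lexlt q p := by
  simp only [lexle, lexlt]; omega

lemma lex_not_lt {p q : ℤ × ℤ} (h : ¬ lexlt p q) : lexle q p := by
  simp only [lexle, lexlt] at *; omega

lemma ratio_O {p q : F} (hp : p ≠ 0) (hq : q ≠ 0) (h : lexle (vv Fq q) (vv Fq p)) :
    p * q⁻¹ ∈ Oring Fq := by
  right
  rw [vv_mul hp (Finv_ne hq), vv_inv hq]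
  simp only [lexle] at *
  omega

lemma ratio_M {p q : F} (hp : p ≠ 0) (hq : q ≠ 0) (h : lexlt (vv Fq q) (vv Fq p)) :
    p * q⁻¹ ∈ Mset Fq := by
  right
  rw [vv_mul hp (Finv_ne hq), vv_inv hq]
  simp only [lexlt, lexle] at *
  omega

lemma pair_eta (p : ℤ × ℤ) : p = (p.1, p.2) := rfl

/-! ### existence: the W-form -/

lemma exW0 {c : F} (hc : c ≠ 0) :
    ∃ η ∈ Rset Fq, !![(0:F), -c⁻¹; c, 0] ∈ doubleCoset Fq η := by
  have hb : -c⁻¹ ≠ (0:F) := Fneg_ne (Finv_ne hc)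
  have h1 : c * c⁻¹ = (1:F) := Fmul_inv hc
  have hinv : (-c⁻¹)⁻¹ = -c := Finv_eq (by linear_combination h1)
  have hmat : !![(0:F), -c⁻¹; c, 0] = !![0, -c⁻¹; -(-c⁻¹)⁻¹, 0] :=
    mk2_eq rfl rfl (by rw [hinv]; ring1) rfl
  refine ⟨eta2 Fq (vv Fq (-c⁻¹)).1 (vv Fq (-c⁻¹)).2, ⟨_, _, Or.inr rfl⟩, ?_⟩
  rw [hmat]
  exact dc_T2 hb rfl

lemma exW {c d : F} (hc : c ≠ 0) :
    ∃ η ∈ Rset Fq, !![(0:F), -c⁻¹; c, d] ∈ doubleCoset Fq η := by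
  have h1 : c * c⁻¹ = (1:F) := Fmul_inv hc
  by_cases hd : d = 0
  · subst hd; exact exW0 hc
  rcases lex_total (vv Fq c) (vv Fq d) with hcase | hcase
  · -- kill d by a column operation C1 += m C0, m = -(d * c⁻¹) ∈ O
    obtain ⟨η, hη, hmem⟩ := exW0 hc
    have hm : -(d * c⁻¹) ∈ Oring Fq := O_neg (ratio_O hd hc hcase)
    refine ⟨η, hη, dc_shift I_one (elemL_mem (O_neg hm)) (Mat_one_mul 1)
      (elemL_inv' (-(d * c⁻¹))) ?_⟩
    rw [Mat_one_mul]
    have heq : !![(0:F), -c⁻¹; c, d] * !![1, -(d * c⁻¹); 0, 1] = !![(0:F), -c⁻¹; c, 0] := by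
      rw [Matrix.mul_fin_two]
      exact mk2_eq (by ring1) (by ring1) (by ring1) (by linear_combination (-d) * h1)
    rw [heq]
    exact hmem
  · by_cases hsum : lexle (1, 0) ((vv Fq c).1 + (vv Fq d).1, (vv Fq c).2 + (vv Fq d).2)
    · -- kill d by a row operation R1 += m R0, m = c * d ∈ M
      obtain ⟨η, hη, hmem⟩ := exW0 hc
      have hm : c * d ∈ Mset Fq := Or.inr (by rw [vv_mul hc hd]; exact hsum)
      refine ⟨η, hη, dc_shift (elemW_mem (M_neg hm)) I_one (elemW_inv (c * d))
        (Mat_mul_one 1) ?_⟩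
      rw [Mat_mul_one]
      have heq : !![(1:F), 0; c * d, 1] * !![(0:F), -c⁻¹; c, d] = !![(0:F), -c⁻¹; c, 0] := by
        rw [Matrix.mul_fin_two]
        exact mk2_eq (by ring1) (by ring1) (by ring1) (by linear_combination (-d) * h1)
      rw [heq]
      exact hmem
    · -- pivot on d : reduce to the diagonal matrix !![d⁻¹, 0; 0, d]
      have h2 : d * d⁻¹ = (1:F) := Fmul_inv hd
      have hm : c⁻¹ * d⁻¹ ∈ Oring Fq := by
        right
        rw [vv_mul (Finv_ne hc) (Finv_ne hd), vv_inv hc, vv_inv hd]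
        simp only [lexle] at *
        omega
      have hw : -(c * d⁻¹) ∈ Mset Fq := M_neg (ratio_M hc hd hcase)
      have hL : !![(1:F), c⁻¹ * d⁻¹; 0, 1] ∈ Iwahori Fq := elemL_mem hm
      have hL' : !![(1:F), -(c⁻¹ * d⁻¹); 0, 1] ∈ Iwahori Fq := elemL_mem (O_neg hm)
      have hR : !![(1:F), 0; -(c * d⁻¹), 1] ∈ Iwahori Fq := elemW_mem hw
      have hR' : !![(1:F), 0; -(-(c * d⁻¹)), 1] ∈ Iwahori Fq := elemW_mem (M_neg hw)
      have heq : !![(1:F), c⁻¹ * d⁻¹; 0, 1] * !![(0:F), -c⁻¹; c, d] *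
          !![(1:F), 0; -(c * d⁻¹), 1] = !![d⁻¹, 0; 0, d] := by
        rw [Matrix.mul_fin_two, Matrix.mul_fin_two]
        refine mk2_eq ?_ ?_ ?_ ?_
        · linear_combination d⁻¹ * h1 - (c⁻¹ * d⁻¹ * c) * h2
        · linear_combination c⁻¹ * h2
        · linear_combination (-c) * h2
        · ring1
      have hdiag : !![d⁻¹, (0:F); 0, d] = !![d⁻¹, d⁻¹ * 0; 0, (d⁻¹)⁻¹] :=
        mk2_eq rfl (by ring1) rfl (Finv_inv d).symm
      refine ⟨eta1 Fq (vv Fq d⁻¹).1 (vv Fq d⁻¹).2, ⟨_, _, Or.inl rfl⟩,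
        dc_shift hL' hR' (elemL_inv (c⁻¹ * d⁻¹)) (elemW_inv' (-(c * d⁻¹))) ?_⟩
      rw [heq, hdiag]
      exact dc_T1 (Finv_ne hd) rfl O_zero

/-! ### existence: the U-form -/

lemma exU {a b : F} (ha : a ≠ 0) :
    ∃ η ∈ Rset Fq, !![a, b; 0, a⁻¹] ∈ doubleCoset Fq η := by
  have h1 : a * a⁻¹ = (1:F) := Fmul_inv ha
  by_cases hb : b = 0
  · subst hb
    have hmat : !![a, (0:F); 0, a⁻¹] = !![a, a * 0; 0, a⁻¹] := mk2_eq rfl (by ring1) rfl rfl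
    refine ⟨eta1 Fq (vv Fq a).1 (vv Fq a).2, ⟨_, _, Or.inl rfl⟩, ?_⟩
    rw [hmat]
    exact dc_T1 ha rfl O_zero
  rcases lex_total (vv Fq a) (vv Fq b) with hcase | hcase
  · -- b/a integral: directly in the eta1 coset
    have hz : b * a⁻¹ ∈ Oring Fq := ratio_O hb ha hcase
    have hmat : !![a, b; 0, a⁻¹] = !![a, a * (b * a⁻¹); 0, a⁻¹] :=
      mk2_eq rfl (by linear_combination (-b) * h1) rfl rfl
    refine ⟨eta1 Fq (vv Fq a).1 (vv Fq a).2, ⟨_, _, Or.inl rfl⟩, ?_⟩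
    rw [hmat]
    exact dc_T1 ha rfl hz
  · -- v(b) < v(a) : column-reduce to the W-form with c = -b⁻¹, d = a⁻¹
    have h2 : b * b⁻¹ = (1:F) := Fmul_inv hb
    have hbne : -b⁻¹ ≠ (0:F) := Fneg_ne (Finv_ne hb)
    have hinv : (-b⁻¹)⁻¹ = -b := Finv_eq (by linear_combination h2)
    have hw : -(a * b⁻¹) ∈ Mset Fq := M_neg (ratio_M ha hb hcase)
    obtain ⟨η, hη, hmem⟩ := exW (d := a⁻¹) hbne
    refine ⟨η, hη, dc_shift I_one (elemW_mem (M_neg hw)) (Mat_one_mul 1)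
      (elemW_inv' (-(a * b⁻¹))) ?_⟩
    rw [Mat_one_mul]
    have heq : !![a, b; 0, a⁻¹] * !![(1:F), 0; -(a * b⁻¹), 1] =
        !![(0:F), -(-b⁻¹)⁻¹; -b⁻¹, a⁻¹] := by
      rw [Matrix.mul_fin_two]
      refine mk2_eq ?_ ?_ ?_ ?_
      · linear_combination (-a) * h2
      · rw [hinv]; ring1
      · linear_combination (-(b⁻¹)) * h1
      · ring1
    rw [heq]
    exact hmem

/-! ### existence : the general case -/

lemma exists_rep {x : Matrix (Fin 2) (Fin 2) (F2 Fq)} (hx : x.det = 1) :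
    ∃ η ∈ Rset Fq, x ∈ doubleCoset Fq η := by
  obtain ⟨a, b, c, d, rfl⟩ : ∃ a b c d, x = !![a, b; c, d] :=
    ⟨x 0 0, x 0 1, x 1 0, x 1 1, Matrix.eta_fin_two x⟩
  rw [Matrix.det_fin_two_of] at hx
  by_cases hc : c = 0
  · subst hc
    have ha : a ≠ 0 := by
      intro h0
      apply F_one_ne_zero (Fq := Fq)
      rw [← hx, h0]
      ring1
    have hd : a⁻¹ = d := Finv_eq (by linear_combination hx)
    have hmat : !![a, b; (0:F), d] = !![a, b; 0, a⁻¹] := mk2_eq rfl rfl rfl hd.symm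
    rw [hmat]
    exact exU ha
  have h1 : c * c⁻¹ = (1:F) := Fmul_inv hc
  by_cases hcase : a ≠ 0 ∧ lexlt (vv Fq a) (vv Fq c)
  · -- row-reduce : kill c
    obtain ⟨ha, hlt⟩ := hcase
    have ha1 : a * a⁻¹ = (1:F) := Fmul_inv ha
    have hw : -(c * a⁻¹) ∈ Mset Fq := M_neg (ratio_M hc ha hlt)
    obtain ⟨η, hη, hmem⟩ := exU (b := b) ha
    refine ⟨η, hη, dc_shift (elemW_mem (M_neg hw)) I_one (elemW_inv (-(c * a⁻¹)))
      (Mat_mul_one 1) ?_⟩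
    rw [Mat_mul_one]
    have heq : !![(1:F), 0; -(c * a⁻¹), 1] * !![a, b; c, d] = !![a, b; 0, a⁻¹] := by
      rw [Matrix.mul_fin_two]
      refine mk2_eq (by ring1) (by ring1) ?_ ?_
      · linear_combination (-c) * ha1
      · linear_combination a⁻¹ * hx - d * ha1
    rw [heq]
    exact hmem
  · -- column entry a is "divisible" by c : kill a
    have hm : -(a * c⁻¹) ∈ Oring Fq := by
      by_cases ha : a = 0
      · rw [ha]
        have h0 : -((0:F) * c⁻¹) = 0 := by ring1
        rw [h0]
        exact O_zero
      · push_neg at hcase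
        exact O_neg (ratio_O ha hc (lex_not_lt (hcase ha)))
    obtain ⟨η, hη, hmem⟩ := exW (d := d) hc
    refine ⟨η, hη, dc_shift (elemL_mem (O_neg hm)) I_one (elemL_inv (-(a * c⁻¹)))
      (Mat_mul_one 1) ?_⟩
    rw [Mat_mul_one]
    have heq : !![(1:F), -(a * c⁻¹); 0, 1] * !![a, b; c, d] = !![(0:F), -c⁻¹; c, d] := by
      rw [Matrix.mul_fin_two]
      refine mk2_eq ?_ ?_ (by ring1) (by ring1)
      · linear_combination (-a) * h1
      · linear_combination (-(c⁻¹)) * hx + (-b) * h1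
    rw [heq]
    exact hmem

/-! ### uniqueness -/

lemma vv_neg (x : F) : vv Fq (-x) = vv Fq x := by
  unfold vv
  rw [HahnSeries.order_neg, HahnSeries.coeff_neg, HahnSeries.order_neg]

lemma I_unit' {a b c d : F} (h : !![a, b; c, d] ∈ Iwahori Fq) :
    a ≠ 0 ∧ d ≠ 0 ∧ vv Fq a = (0, 0) ∧ vv Fq d = (0, 0) := by
  obtain ⟨h1, h2, h3, h4⟩ := I_unit h
  rw [entry_simp.1] at h1 h3
  rw [entry_simp.2.2.2] at h2 h4
  exact ⟨h1, h2, h3, h4⟩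

lemma vv_balance {p h' : F} {i j k l : ℤ} (hp : p ≠ 0) (hvp : vv Fq p = (0, 0))
    (hh : h' ≠ 0) (hvh : vv Fq h' = (0, 0)) (e : p * tm i j = tm k l * h') :
    i = k ∧ j = l := by
  have hv := congrArg (vv Fq) e
  rw [vv_mul hp (tm_ne_zero _ _), vv_mul (tm_ne_zero _ _) hh, vv_tm, vv_tm, hvp, hvh] at hv
  have h1 : (0:ℤ) + i = k + 0 := congrArg Prod.fst hv
  have h2 : (0:ℤ) + j = l + 0 := congrArg Prod.snd hv
  omega

lemma vv_clash {g01 g10 h00 h11 : F} {i j k l : ℤ}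
    (hg01 : g01 ∈ Oring Fq) (hg10 : g10 ∈ Mset Fq)
    (h00ne : h00 ≠ 0) (hv00 : vv Fq h00 = (0, 0))
    (h11ne : h11 ≠ 0) (hv11 : vv Fq h11 = (0, 0))
    (e1 : g01 * tm (-i) (-j) = tm k l * h11)
    (e2 : g10 * tm i j = -(tm (-k) (-l) * h00)) : False := by
  have hg01ne : g01 ≠ 0 := by
    intro h0
    rw [h0, Fzero_mul] at e1
    exact Fmul_ne_zero (tm_ne_zero k l) h11ne e1.symm
  have hg10ne : g10 ≠ 0 := by
    intro h0
    rw [h0, Fzero_mul] at e2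
    exact Fneg_ne (Fmul_ne_zero (tm_ne_zero (-k) (-l)) h00ne) e2.symm
  have hv1 := congrArg (vv Fq) e1
  rw [vv_mul hg01ne (tm_ne_zero _ _), vv_mul (tm_ne_zero _ _) h11ne, vv_tm, vv_tm, hv11] at hv1
  have hv2 := congrArg (vv Fq) e2
  rw [vv_neg, vv_mul hg10ne (tm_ne_zero _ _), vv_mul (tm_ne_zero _ _) h00ne,
    vv_tm, vv_tm, hv00] at hv2
  have a1 : (vv Fq g01).1 + -i = k + 0 := congrArg Prod.fst hv1
  have a2 : (vv Fq g01).2 + -j = l + 0 := congrArg Prod.snd hv1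
  have b1 : (vv Fq g10).1 + i = -k + 0 := congrArg Prod.fst hv2
  have b2 : (vv Fq g10).2 + j = -l + 0 := congrArg Prod.snd hv2
  have hO : lexle (0, 0) (vv Fq g01) := hg01.resolve_left hg01ne
  have hM : lexle (1, 0) (vv Fq g10) := hg10.resolve_left hg10ne
  simp only [lexle] at hO hM
  omega

lemma dc_unique {ηa ηb : Matrix (Fin 2) (Fin 2) (F2 Fq)} (ha : ηa ∈ Rset Fq)
    (hb : ηb ∈ Rset Fq) {x : Matrix (Fin 2) (Fin 2) (F2 Fq)}
    (hxa : x ∈ doubleCoset Fq ηa) (hxb : x ∈ doubleCoset Fq ηb) : ηa = ηb := by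
  obtain ⟨g1, hg1, h1, hh1, hx1⟩ := hxa
  obtain ⟨g2, hg2, h2, hh2, hx2⟩ := hxb
  obtain ⟨g2', hg2'I, _, hg2'⟩ := I_inv hg2
  obtain ⟨h1', hh1'I, hh1', _⟩ := I_inv hh1
  have heq12 : g1 * ηa * h1 = g2 * ηb * h2 := by rw [← hx1, ← hx2]
  have key : (g2' * g1) * ηa = ηb * (h2 * h1') := by
    calc (g2' * g1) * ηa = (g2' * g1) * ηa * (h1 * h1') := by rw [hh1', Mat_mul_one]
    _ = g2' * (g1 * ηa * h1) * h1' := by simp only [Mat_assoc]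
    _ = g2' * (g2 * ηb * h2) * h1' := by rw [heq12]
    _ = (g2' * g2) * ηb * (h2 * h1') := by simp only [Mat_assoc]
    _ = ηb * (h2 * h1') := by rw [hg2', Mat_one_mul]
  have hGI : g2' * g1 ∈ Iwahori Fq := I_mul hg2'I hg1
  have hHI : h2 * h1' ∈ Iwahori Fq := I_mul hh2 hh1'I
  obtain ⟨p, q, r, s, hG⟩ : ∃ p q r s, g2' * g1 = !![p, q; r, s] :=
    ⟨_, _, _, _, Matrix.eta_fin_two _⟩
  obtain ⟨p', q', r', s', hH⟩ : ∃ p' q' r' s', h2 * h1' = !![p', q'; r', s'] :=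
    ⟨_, _, _, _, Matrix.eta_fin_two _⟩
  rw [hG] at hGI
  rw [hH] at hHI
  rw [hG, hH] at key
  obtain ⟨pO, qO, rM, sO, -⟩ := I_entries' hGI
  obtain ⟨pne, sne, pv, sv⟩ := I_unit' hGI
  obtain ⟨pO', qO', rM', sO', -⟩ := I_entries' hHI
  obtain ⟨pne', sne', pv', sv'⟩ := I_unit' hHI
  obtain ⟨i, j, hija⟩ := ha
  obtain ⟨k, l, hklb⟩ := hb
  rcases hija with h1a | h2a <;> rcases hklb with h1b | h2b
  · -- eta1 vs eta1
    subst h1a h1b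
    rw [eta1_eq, eta1_eq, Matrix.mul_fin_two, Matrix.mul_fin_two] at key
    obtain ⟨e00, -, -, -⟩ := mk2_inj key
    have e : p * tm i j = tm k l * p' := by linear_combination e00
    obtain ⟨hik, hjl⟩ := vv_balance pne pv pne' pv' e
    rw [hik, hjl]
  · -- eta1 vs eta2 : impossible
    subst h1a h2b
    rw [eta1_eq, eta2_eq, Matrix.mul_fin_two, Matrix.mul_fin_two] at key
    obtain ⟨-, e01, e10, -⟩ := mk2_inj key
    have E1 : q * tm (-i) (-j) = tm k l * s' := by linear_combination e01
    have E2 : r * tm i j = -(tm (-k) (-l) * p') := by linear_combination e10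
    exact (vv_clash qO rM pne' pv' sne' sv' E1 E2).elim
  · -- eta2 vs eta1 : impossible
    subst h2a h1b
    rw [eta2_eq, eta1_eq, Matrix.mul_fin_two, Matrix.mul_fin_two] at key
    obtain ⟨e00, -, -, e11⟩ := mk2_inj key
    have E1' : q * tm (-i) (-j) = tm k l * (-p') := by linear_combination -e00
    have E2' : r * tm i j = -(tm (-k) (-l) * (-s')) := by linear_combination e11
    have hvns : vv Fq (-s') = (0, 0) := by rw [vv_neg, sv']
    have hvnp : vv Fq (-p') = (0, 0) := by rw [vv_neg, pv']
    exact (vv_clash qO rM (Fneg_ne sne') hvns (Fneg_ne pne') hvnp E1' E2').elim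
  · -- eta2 vs eta2
    subst h2a h2b
    rw [eta2_eq, eta2_eq, Matrix.mul_fin_two, Matrix.mul_fin_two] at key
    obtain ⟨-, e01, -, -⟩ := mk2_inj key
    have e : p * tm i j = tm k l * s' := by linear_combination e01
    obtain ⟨hik, hjl⟩ := vv_balance pne pv sne' sv' e
    rw [hik, hjl]

end Bruhat

/-- Every `x ∈ SL₂(F)` lies in `I·η·I` for exactly one `η ∈ R`. -/
theorem bruhat_decomposition (Fq : Type) [Field Fq] [Fintype Fq]
    (x : Matrix (Fin 2) (Fin 2) (F2 Fq)) (hx : x ∈ SL2 Fq) :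
    ∃! η, η ∈ Rset Fq ∧ x ∈ doubleCoset Fq η := by
  obtain ⟨η, hηR, hηx⟩ := Bruhat.exists_rep (Fq := Fq) hx
  refine ⟨η, ⟨hηR, hηx⟩, ?_⟩
  rintro η' ⟨hη'R, hη'x⟩
  exact Bruhat.dc_unique hη'R hηR hη'x hηx
end
end

section
/- Let x = (a b; c d) ∈ SL2(F). If v(a) ≤ v(b) and v(a) < v(c), then x ∈ I · (a, 0; 0, a^{-1}) · I. -/
noncomputable section

variable (Fq : Type) [Field Fq] [Fintype Fq]

set_option linter.unusedSectionVars false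

lemma t1_ne : t1 Fq ≠ 0 := by
  simp [t1, HahnSeries.single_ne_zero, HahnSeries.single_eq_zero_iff]

lemma vv_t1 : vv Fq (t1 Fq) = (1, 0) := by
  have h1 : (HahnSeries.single (1:ℤ) (1:Fq)) ≠ 0 := by
    simp [HahnSeries.single_eq_zero_iff]
  simp [vv, t1, HahnSeries.order_single, h1]

lemma vv_one : vv Fq (1 : F2 Fq) = (0, 0) := by
  simp [vv]

lemma vv_mul (x y : F2 Fq) (hx : x ≠ 0) (hy : y ≠ 0) :
    vv Fq (x * y) = vv Fq x + vv Fq y := by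
  have h1 : (x * y).order = x.order + y.order := HahnSeries.order_mul hx hy
  have h2 := HahnSeries.coeff_mul_order_add_order x y
  have hlx : x.leadingCoeff ≠ 0 := HahnSeries.leadingCoeff_ne_zero.mpr hx
  have hly : y.leadingCoeff ≠ 0 := HahnSeries.leadingCoeff_ne_zero.mpr hy
  unfold vv
  rw [h1, h2, HahnSeries.order_mul hlx hly, HahnSeries.leadingCoeff_eq,
    HahnSeries.leadingCoeff_eq]
  rfl

lemma vv_inv (x : F2 Fq) (hx : x ≠ 0) : vv Fq x⁻¹ = -vv Fq x := by
  have hxi : x⁻¹ ≠ 0 := inv_ne_zero (G₀ := F2 Fq) hx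
  have h := vv_mul Fq x x⁻¹ hx hxi
  rw [mul_inv_cancel₀ (G₀ := F2 Fq) hx, vv_one] at h
  have h1 := congrArg Prod.fst h
  have h2 := congrArg Prod.snd h
  simp [Prod.fst_add, Prod.snd_add] at h1 h2
  ext <;> simp <;> omega

lemma zero_mem_O : (0 : F2 Fq) ∈ Oring Fq := Or.inl rfl

lemma one_mem_O : (1 : F2 Fq) ∈ Oring Fq := by
  right; rw [vv_one]; exact Or.inr ⟨rfl, le_refl 0⟩

lemma div_mem_O (x y : F2 Fq) (hx : x ≠ 0) (hy : y ≠ 0)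
    (h : lexle (vv Fq x) (vv Fq y)) : y * x⁻¹ ∈ Oring Fq := by
  right
  rw [vv_mul Fq y x⁻¹ hy (inv_ne_zero (G₀ := F2 Fq) hx), vv_inv Fq x hx]
  unfold lexle at h ⊢
  rcases h with h | h
  · left; simp only [Prod.snd_add, Prod.snd_neg, Prod.fst_zero, Prod.snd_zero]; omega
  · right
    constructor
    · simp only [Prod.snd_add, Prod.snd_neg, Prod.snd_zero]; omega
    · simp only [Prod.fst_add, Prod.fst_neg, Prod.fst_zero]; omega

lemma t1div_mem_O (x y : F2 Fq) (hx : x ≠ 0) (hy : y ≠ 0)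
    (h : lexlt (vv Fq x) (vv Fq y)) :
    ∃ z ∈ Oring Fq, y * x⁻¹ = t1 Fq * z := by
  refine ⟨y * x⁻¹ * (t1 Fq)⁻¹, ?_, ?_⟩
  · right
    have hyx : y * x⁻¹ ≠ 0 :=
      mul_ne_zero hy (inv_ne_zero (G₀ := F2 Fq) hx)
    rw [vv_mul Fq (y * x⁻¹) (t1 Fq)⁻¹ hyx (inv_ne_zero (G₀ := F2 Fq) (t1_ne Fq)),
      vv_mul Fq y x⁻¹ hy (inv_ne_zero (G₀ := F2 Fq) hx), vv_inv Fq x hx,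
      vv_inv Fq (t1 Fq) (t1_ne Fq), vv_t1]
    unfold lexlt at h
    unfold lexle
    rcases h with h | h
    · left
      simp only [Prod.snd_add, Prod.snd_neg, Prod.fst_zero, Prod.snd_zero]; omega
    · right
      constructor
      · simp only [Prod.snd_add, Prod.snd_neg, Prod.snd_zero]; omega
      · simp only [Prod.fst_add, Prod.fst_neg, Prod.fst_zero]; omega
  · have h1 : t1 Fq * (t1 Fq)⁻¹ = 1 := mul_inv_cancel₀ (G₀ := F2 Fq) (t1_ne Fq)
    have e1 : t1 Fq * (y * x⁻¹ * (t1 Fq)⁻¹) = y * x⁻¹ * (t1 Fq * (t1 Fq)⁻¹) := by ring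
    have e2 : y * x⁻¹ * (1 : F2 Fq) = y * x⁻¹ := by ring
    rw [e1, h1, e2]

lemma lexlt_le (p q : ℤ × ℤ) (h : lexlt p q) : lexle p q := by
  unfold lexlt at h; unfold lexle
  rcases h with h | h
  · exact Or.inl h
  · exact Or.inr ⟨h.1, le_of_lt h.2⟩

/-- Lemma 1.2(1): if `v(a) ≤ v(b)` and `v(a) < v(c)`, then
`(a b; c d) ∈ I·diag(a, a⁻¹)·I`. -/
theorem case_diag_a (Fq : Type) [Field Fq] [Fintype Fq] (a b c d : F2 Fq)
    (hx : (!![a, b; c, d] : Matrix (Fin 2) (Fin 2) (F2 Fq)).det = 1)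
    (hab : vle Fq a b) (hac : vlt Fq a c) :
    (!![a, b; c, d] : Matrix (Fin 2) (Fin 2) (F2 Fq)) ∈
      doubleCoset Fq !![a, 0; 0, a⁻¹] := by
  obtain ⟨ha, hb⟩ := hab
  obtain ⟨-, hc⟩ := hac
  have hai : a⁻¹ ≠ 0 := inv_ne_zero (G₀ := F2 Fq) ha
  rw [Matrix.det_fin_two_of] at hx
  have hdet : a * d - b * c = 1 := hx
  have hba : b * a⁻¹ ∈ Oring Fq := by
    by_cases hbz : b = 0
    · subst hbz
      have h0 : (0 : F2 Fq) * a⁻¹ = 0 := by ring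
      rw [h0]; exact zero_mem_O Fq
    · exact div_mem_O Fq a b ha hbz (hb.resolve_left hbz)
  have hca : ∃ z ∈ Oring Fq, c * a⁻¹ = t1 Fq * z := by
    by_cases hcz : c = 0
    · subst hcz; exact ⟨0, zero_mem_O Fq, by ring⟩
    · exact t1div_mem_O Fq a c ha hcz (hc.resolve_left hcz)
  have hcaO : c * a⁻¹ ∈ Oring Fq := by
    by_cases hcz : c = 0
    · subst hcz
      have h0 : (0 : F2 Fq) * a⁻¹ = 0 := by ring
      rw [h0]; exact zero_mem_O Fq
    · exact div_mem_O Fq a c ha hcz (lexlt_le _ _ (hc.resolve_left hcz))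
  refine ⟨!![1, 0; c * a⁻¹, 1], ?_, !![1, b * a⁻¹; 0, 1], ?_, ?_⟩
  · refine ⟨by rw [Matrix.det_fin_two_of]; ring, ?_, ?_⟩
    · intro i j
      fin_cases i <;> fin_cases j <;>
        simp only [Fin.zero_eta, Fin.mk_one, Fin.isValue, Matrix.of_apply, Matrix.cons_val', Matrix.cons_val_zero, Matrix.empty_val',
        Matrix.cons_val_fin_one, Matrix.cons_val_one, Matrix.head_cons, Matrix.head_fin_const]
      exacts [one_mem_O Fq, zero_mem_O Fq, hcaO, one_mem_O Fq]
    · simpa only [Fin.isValue, Matrix.of_apply, Matrix.cons_val', Matrix.cons_val_zero, Matrix.empty_val',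
        Matrix.cons_val_fin_one, Matrix.cons_val_one, Matrix.head_cons, Matrix.head_fin_const] using hca
  · refine ⟨by rw [Matrix.det_fin_two_of]; ring, ?_,
      ⟨0, zero_mem_O Fq, by
        show (0 : F2 Fq) = t1 Fq * 0
        ring⟩⟩
    intro i j
    fin_cases i <;> fin_cases j <;>
      simp only [Fin.zero_eta, Fin.mk_one, Fin.isValue, Matrix.of_apply, Matrix.cons_val', Matrix.cons_val_zero, Matrix.empty_val',
        Matrix.cons_val_fin_one, Matrix.cons_val_one, Matrix.head_cons, Matrix.head_fin_const]
    exacts [one_mem_O Fq, hba, zero_mem_O Fq, one_mem_O Fq]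
  · rw [← Matrix.ext_iff]
    intro i j
    fin_cases i <;> fin_cases j <;>
      simp only [Fin.zero_eta, Fin.mk_one, Fin.isValue, Matrix.mul_apply,
        Fin.sum_univ_two, Matrix.of_apply, Matrix.cons_val', Matrix.cons_val_zero, Matrix.empty_val',
        Matrix.cons_val_fin_one, Matrix.cons_val_one, Matrix.head_cons, Matrix.head_fin_const]
    · ring
    · have h1 : a * a⁻¹ = 1 := mul_inv_cancel₀ (G₀ := F2 Fq) ha
      have e1 : (1 * a + 0 * 0) * (b * a⁻¹) + (1 * 0 + 0 * a⁻¹) * 1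
          = b * (a * a⁻¹) := by ring
      have e2 : b * (1 : F2 Fq) = b := by ring
      rw [e1, h1, e2]
    · have h1 : a * a⁻¹ = 1 := mul_inv_cancel₀ (G₀ := F2 Fq) ha
      have e1 : (c * a⁻¹ * a + 1 * 0) * 1 + (c * a⁻¹ * 0 + 1 * a⁻¹) * 0
          = c * (a * a⁻¹) := by ring
      have e2 : c * (1 : F2 Fq) = c := by ring
      rw [e1, h1, e2]
    · have h1 : a * a⁻¹ = 1 := mul_inv_cancel₀ (G₀ := F2 Fq) ha
      have e1 : (c * a⁻¹ * a + 1 * 0) * (b * a⁻¹) + (c * a⁻¹ * 0 + 1 * a⁻¹) * 1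
          = (b * c + 1) * a⁻¹ * (a * a⁻¹) + (1 - a * a⁻¹) * a⁻¹ := by ring
      have e3 : b * c + 1 = a * d := by rw [← hdet]; ring
      have e4 : a * d * a⁻¹ * (1 : F2 Fq) + (1 - (1 : F2 Fq)) * a⁻¹
          = d * (a * a⁻¹) := by ring
      have e5 : d * (1 : F2 Fq) = d := by ring
      rw [e1, h1, e3, e4, h1, e5]
end
end
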